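/- Let μ be a probability measure, L an operator on L²(μ) with domain D(L), ρ > 0 and S a bounded symmetric operator on L²(μ) such that for all f ∈ D(L): ‖Sf‖₂ ≤ (1/2)‖f − μf‖₂ and ⟨f, Lf + S(Lf)⟩ ≤ −ρ‖f − μf‖₂². Let V ∈ L^∞(μ) with μV = 0 and 3‖V‖_∞ < 2ρ. Then Λ(V) := sup{ ⟨f, (L+V)f⟩_B : f ∈ D(L), ‖f‖_B = 1 } satisfies Λ(V) ≤ 25‖V‖₂² / (4ρ − 6‖V‖_∞), where ⟨f,g⟩_B = ⟨f, (Id+S)g⟩ and ‖f‖_B = √⟨f,f⟩_B. -/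

import Mathlib

open MeasureTheory
open scoped RealInnerProductSpace ENNReal

/-!
Write `f = c + g` with `c = μf` and `g` centered. The normalisation `⟨f, f + Sf⟩ = 1` together
with `‖Sf‖ ≤ ‖g‖/2` forces `|c| ≤ 2`. Since `μV = 0`, the constant part does not interact with `V`
on the diagonal (`⟨c, Vc⟩ = c² μV = 0`), so the perturbation `V` contributes at most
`(5/2)|c|‖V‖₂‖g‖ + (3/2)‖V‖_∞‖g‖²`, while `L` contributes at most `-ρ‖g‖²`. Maximising this
concave quadratic in `‖g‖` gives the bound.
-/

lemma neg_mul_sq_add_mul_le_div {a : ℝ} (ha : 0 < a) (b s : ℝ) :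
    -a * s ^ 2 + b * s ≤ b ^ 2 / (4 * a) := by
  rw [le_div_iff₀ (by positivity)]
  nlinarith [sq_nonneg (2 * a * s - b)]

section InnerProductSpace

variable {H : Type*} [NormedAddCommGroup H] [InnerProductSpace ℝ H]

lemma norm_le_two_of_inner_add_eq_one {c g w : H} (hcg : ⟪c, g⟫ = 0) (hw : ‖w‖ ≤ ‖g‖ / 2)
    (h : ⟪c + g, c + g + w⟫ = 1) : ‖c‖ ≤ 2 := by
  have hself : ⟪c + g, c + g⟫ = ‖c‖ ^ 2 + ‖g‖ ^ 2 := by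
    rw [real_inner_add_add_self, hcg, real_inner_self_eq_norm_sq, real_inner_self_eq_norm_sq]
    ring
  have hcross : -(‖c + g‖ * ‖w‖) ≤ ⟪c + g, w⟫ := neg_le_of_abs_le (abs_real_inner_le_norm _ _)
  have hcg_norm : ‖c + g‖ ≤ ‖c‖ + ‖g‖ := norm_add_le c g
  rw [inner_add_right, hself] at h
  nlinarith [norm_nonneg c, norm_nonneg g, norm_nonneg w, norm_nonneg (c + g),
    mul_le_mul hcg_norm hw (norm_nonneg w) (by positivity)]

lemma inner_add_map_add_le {S M : H →ₗ[ℝ] H} (hS : S.IsSymmetric) (hM : M.IsSymmetric) {ε : ℝ}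
    (hMε : ∀ h, ‖M h‖ ≤ ε * ‖h‖) {c g : H} (hc : ⟪c, M c⟫ = 0) (hSf : ‖S (c + g)‖ ≤ ‖g‖ / 2) :
    ⟪c + g, M (c + g) + S (M (c + g))⟫ ≤ 5 / 2 * ‖M c‖ * ‖g‖ + 3 / 2 * ε * ‖g‖ ^ 2 := by
  have hdiag : ⟪c + g, M (c + g)⟫ = 2 * ⟪M c, g⟫ + ⟪g, M g⟫ := by
    rw [map_add, inner_add_left, inner_add_right, inner_add_right, hc, ← hM c g,
      real_inner_comm (M c) g]
    ring
  have hMf : ‖M (c + g)‖ ≤ ‖M c‖ + ε * ‖g‖ :=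
    (map_add M c g ▸ norm_add_le _ _).trans (add_le_add_right (hMε g) _)
  have hMg : ⟪g, M g⟫ ≤ ε * ‖g‖ ^ 2 := calc
    ⟪g, M g⟫ ≤ ‖g‖ * ‖M g‖ := real_inner_le_norm _ _
    _ ≤ ‖g‖ * (ε * ‖g‖) := mul_le_mul_of_nonneg_left (hMε g) (norm_nonneg g)
    _ = ε * ‖g‖ ^ 2 := by ring
  have hSM : ⟪c + g, S (M (c + g))⟫ ≤ ‖g‖ / 2 * (‖M c‖ + ε * ‖g‖) := calc
    ⟪c + g, S (M (c + g))⟫ = ⟪S (c + g), M (c + g)⟫ := (hS _ _).symm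
    _ ≤ ‖S (c + g)‖ * ‖M (c + g)‖ := real_inner_le_norm _ _
    _ ≤ ‖g‖ / 2 * (‖M c‖ + ε * ‖g‖) := mul_le_mul hSf hMf (norm_nonneg _) (by positivity)
  rw [inner_add_right, hdiag]
  nlinarith [real_inner_le_norm (M c) g]

end InnerProductSpace

namespace MeasureTheory.L2

variable {E : Type*} [MeasurableSpace E] {μ : Measure E}

lemma real_inner_eq_integral (u v : Lp ℝ 2 μ) : ⟪u, v⟫ = ∫ x, u x * v x ∂μ := by
  simp [L2.inner_def, mul_comm]

lemma inner_const_left [IsFiniteMeasure μ] (c : ℝ) (f : Lp ℝ 2 μ) :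
    ⟪Lp.const 2 μ c, f⟫ = c * ∫ x, f x ∂μ := by
  rw [real_inner_eq_integral, ← integral_const_mul]
  refine integral_congr_ae ?_
  filter_upwards [Lp.coeFn_const 2 μ c] with x hx
  rw [hx, Function.const_apply]

lemma norm_const_of_isProbabilityMeasure [IsProbabilityMeasure μ] (c : ℝ) :
    ‖Lp.const 2 μ c‖ = |c| := by
  simp [Lp.norm_const']

lemma inner_const_sub_const_integral [IsProbabilityMeasure μ] (c : ℝ) (f : Lp ℝ 2 μ) :
    ⟪Lp.const 2 μ c, f - Lp.const 2 μ (∫ x, f x ∂μ)⟫ = 0 := by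
  rw [inner_sub_right, inner_const_left, inner_const_left,
    integral_congr_ae (Lp.coeFn_const 2 μ _)]
  simp

section MultiplicationOperator

variable {V : E → ℝ}

lemma isSymmetric_of_ae_eq_mul {M : Lp ℝ 2 μ →ₗ[ℝ] Lp ℝ 2 μ}
    (hM : ∀ f : Lp ℝ 2 μ, M f =ᵐ[μ] fun x => V x * f x) : M.IsSymmetric := by
  intro u v
  rw [real_inner_eq_integral, real_inner_eq_integral]
  refine integral_congr_ae ?_
  filter_upwards [hM u, hM v] with x hu hv
  rw [hu, hv]
  ring

variable {M : Lp ℝ 2 μ → Lp ℝ 2 μ}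

lemma norm_apply_le_of_ae_eq_mul (hM : ∀ f : Lp ℝ 2 μ, M f =ᵐ[μ] fun x => V x * f x)
    (hV : MemLp V ∞ μ) (f : Lp ℝ 2 μ) :
    ‖M f‖ ≤ (eLpNorm V ∞ μ).toReal * ‖f‖ := by
  have hle : eLpNorm (M f) 2 μ ≤ eLpNorm V ∞ μ * eLpNorm f 2 μ := by
    rw [eLpNorm_congr_ae (hM f)]
    exact eLpNorm_smul_le_eLpNorm_top_mul_eLpNorm 2 (Lp.aestronglyMeasurable f) V
  rw [Lp.norm_def, Lp.norm_def, ← ENNReal.toReal_mul]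
  exact ENNReal.toReal_mono (ENNReal.mul_ne_top hV.eLpNorm_ne_top (Lp.eLpNorm_ne_top f)) hle

lemma norm_apply_const_of_ae_eq_mul [IsFiniteMeasure μ] (hM : ∀ f : Lp ℝ 2 μ, M f =ᵐ[μ] fun x => V x * f x)
    (c : ℝ) :
    ‖M (Lp.const 2 μ c)‖ = |c| * (eLpNorm V 2 μ).toReal := by
  have hMc : M (Lp.const 2 μ c) =ᵐ[μ] c • V := by
    filter_upwards [hM (Lp.const 2 μ c), Lp.coeFn_const 2 μ c] with x h1 h2
    rw [h1, h2, Function.const_apply, Pi.smul_apply, smul_eq_mul, mul_comm]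
  rw [Lp.norm_def, eLpNorm_congr_ae hMc, eLpNorm_const_smul, ENNReal.toReal_mul]
  simp

lemma inner_const_apply_const_of_ae_eq_mul [IsFiniteMeasure μ]
    (hM : ∀ f : Lp ℝ 2 μ, M f =ᵐ[μ] fun x => V x * f x) (c : ℝ) :
    ⟪Lp.const 2 μ c, M (Lp.const 2 μ c)⟫ = c ^ 2 * ∫ x, V x ∂μ := by
  rw [inner_const_left, ← integral_const_mul, ← integral_const_mul]
  refine integral_congr_ae ?_
  filter_upwards [hM (Lp.const 2 μ c), Lp.coeFn_const 2 μ c] with x h1 h2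
  rw [h1, h2, Function.const_apply]
  ring

end MultiplicationOperator

end MeasureTheory.L2

theorem lambda_V_bound_general
    {E : Type*} [MeasurableSpace E] (μ : Measure E) [IsProbabilityMeasure μ]
    (L : Lp ℝ 2 μ →ₗ.[ℝ] Lp ℝ 2 μ)
    (ρ : ℝ)
    (S : Lp ℝ 2 μ →L[ℝ] Lp ℝ 2 μ)
    (hSsym : ∀ f g : Lp ℝ 2 μ, ⟪S f, g⟫ = ⟪f, S g⟫)
    (hS1 : ∀ f : L.domain,
      ‖S f‖ ≤ (1 / 2) * ‖(f : Lp ℝ 2 μ) - Lp.const 2 μ (∫ x, (f : Lp ℝ 2 μ) x ∂μ)‖)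
    (hS2 : ∀ f : L.domain,
      ⟪(f : Lp ℝ 2 μ), L f + S (L f)⟫
        ≤ -ρ * ‖(f : Lp ℝ 2 μ) - Lp.const 2 μ (∫ x, (f : Lp ℝ 2 μ) x ∂μ)‖ ^ 2)
    (V : E → ℝ) (hV : MemLp V ⊤ μ) (hVmean : ∫ x, V x ∂μ = 0)
    (M : Lp ℝ 2 μ →L[ℝ] Lp ℝ 2 μ)
    (hM : ∀ f : Lp ℝ 2 μ, M f =ᵐ[μ] fun x => V x * f x)
    (hVsmall : 3 * (eLpNorm V ⊤ μ).toReal < 2 * ρ) :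
    sSup {a : ℝ | ∃ f : L.domain,
        Real.sqrt ⟪(f : Lp ℝ 2 μ), (f : Lp ℝ 2 μ) + S (f : Lp ℝ 2 μ)⟫ = 1 ∧
        a = ⟪(f : Lp ℝ 2 μ), (L f + M (f : Lp ℝ 2 μ)) + S (L f + M (f : Lp ℝ 2 μ))⟫}
      ≤ 25 * (eLpNorm V 2 μ).toReal ^ 2 / (4 * ρ - 6 * (eLpNorm V ⊤ μ).toReal) := by
  set ε := (eLpNorm V ⊤ μ).toReal
  set ν := (eLpNorm V 2 μ).toReal
  have hgap : 0 < 4 * ρ - 6 * ε := by linarith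
  refine Real.sSup_le ?_ (div_nonneg (by positivity) hgap.le)
  rintro _ ⟨f, hfB, rfl⟩
  set c := ∫ x, (f : Lp ℝ 2 μ) x ∂μ
  set g := (f : Lp ℝ 2 μ) - Lp.const 2 μ c
  have hf : (f : Lp ℝ 2 μ) = Lp.const 2 μ c + g := (add_sub_cancel _ _).symm
  have hSf : ‖S (Lp.const 2 μ c + g)‖ ≤ ‖g‖ / 2 := by rw [← hf]; linarith [hS1 f]
  have hc : |c| ≤ 2 := by
    rw [← L2.norm_const_of_isProbabilityMeasure (μ := μ)]
    exact norm_le_two_of_inner_add_eq_one (L2.inner_const_sub_const_integral c _) hSf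
      (hf ▸ Real.sqrt_eq_one.mp hfB)
  have hV0 : ⟪Lp.const 2 μ c, M (Lp.const 2 μ c)⟫ = 0 := by
    rw [L2.inner_const_apply_const_of_ae_eq_mul hM, hVmean, mul_zero]
  have hpert : ⟪(f : Lp ℝ 2 μ), M f + S (M f)⟫
      ≤ 5 / 2 * (|c| * ν) * ‖g‖ + 3 / 2 * ε * ‖g‖ ^ 2 := by
    rw [← L2.norm_apply_const_of_ae_eq_mul hM, hf]
    exact inner_add_map_add_le (S := S.toLinearMap) (M := M.toLinearMap) hSsym
      (L2.isSymmetric_of_ae_eq_mul hM) (L2.norm_apply_le_of_ae_eq_mul hM hV) hV0 hSf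
  calc _ = ⟪(f : Lp ℝ 2 μ), L f + S (L f)⟫ + ⟪(f : Lp ℝ 2 μ), M f + S (M f)⟫ := by
        rw [map_add, add_add_add_comm, inner_add_right]
    _ ≤ -ρ * ‖g‖ ^ 2 + (5 / 2 * (|c| * ν) * ‖g‖ + 3 / 2 * ε * ‖g‖ ^ 2) :=
        add_le_add (hS2 f) hpert
    _ = -(ρ - 3 / 2 * ε) * ‖g‖ ^ 2 + 5 / 2 * |c| * ν * ‖g‖ := by ring
    _ ≤ (5 / 2 * |c| * ν) ^ 2 / (4 * (ρ - 3 / 2 * ε)) :=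
        neg_mul_sq_add_mul_le_div (by linarith) _ _
    _ = 25 / 4 * |c| ^ 2 * ν ^ 2 / (4 * ρ - 6 * ε) := by ring_nf
    _ ≤ 25 * ν ^ 2 / (4 * ρ - 6 * ε) := by
        gcongr
        nlinarith [abs_nonneg c, sq_nonneg ν]

/-- Under hypothesis (H) for `(L, S, ρ)`, if `V ∈ L^∞(μ)` with `μV = 0`
and `3‖V‖_∞ < 2ρ`, then `Λ(V) = sup{⟨f,(L+V)f⟩_B : f ∈ D(L), ‖f‖_B = 1}` satisfies
`Λ(V) ≤ 25‖V‖₂²/(4ρ − 6‖V‖_∞)`. -/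
theorem lambda_V_bound
    {E : Type*} [MeasurableSpace E] (μ : Measure E) [IsProbabilityMeasure μ]
    (L : Lp ℝ 2 μ →ₗ.[ℝ] Lp ℝ 2 μ)
    (ρ : ℝ) (hρ : 0 < ρ)
    (S : Lp ℝ 2 μ →L[ℝ] Lp ℝ 2 μ)
    (hSsym : ∀ f g : Lp ℝ 2 μ, ⟪S f, g⟫ = ⟪f, S g⟫)
    (hS1 : ∀ f : L.domain,
      ‖S f‖ ≤ (1 / 2) * ‖(f : Lp ℝ 2 μ) - Lp.const 2 μ (∫ x, (f : Lp ℝ 2 μ) x ∂μ)‖)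
    (hS2 : ∀ f : L.domain,
      ⟪(f : Lp ℝ 2 μ), L f + S (L f)⟫
        ≤ -ρ * ‖(f : Lp ℝ 2 μ) - Lp.const 2 μ (∫ x, (f : Lp ℝ 2 μ) x ∂μ)‖ ^ 2)
    (V : E → ℝ) (hV : MemLp V ⊤ μ) (hVmean : ∫ x, V x ∂μ = 0)
    (M : Lp ℝ 2 μ →L[ℝ] Lp ℝ 2 μ)
    (hM : ∀ f : Lp ℝ 2 μ, M f =ᵐ[μ] fun x => V x * f x)
    (hVsmall : 3 * (eLpNorm V ⊤ μ).toReal < 2 * ρ) :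
    sSup {a : ℝ | ∃ f : L.domain,
        Real.sqrt ⟪(f : Lp ℝ 2 μ), (f : Lp ℝ 2 μ) + S (f : Lp ℝ 2 μ)⟫ = 1 ∧
        a = ⟪(f : Lp ℝ 2 μ), (L f + M (f : Lp ℝ 2 μ)) + S (L f + M (f : Lp ℝ 2 μ))⟫}
      ≤ 25 * (eLpNorm V 2 μ).toReal ^ 2 / (4 * ρ - 6 * (eLpNorm V ⊤ μ).toReal) :=
  lambda_V_bound_general μ L ρ S hSsym hS1 hS2 V hV hVmean M hM hVsmall
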